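/- arXiv:1808.10212 — 3 statements merged into one kernel-verified Lean document; each statement's English description precedes it below -/
import Mathlib

section
/- Let L > 0, let s : ℝ → ℝ be continuous and L-periodic with s(x) ≤ 0 for all x ∈ ℝ, let u : ℝ → ℂ be twice continuously differentiable, L-periodic and not identically zero, and let λ ∈ ℝ satisfy u''(x) + s(x)·u(x) = -λ·u(x) for all x ∈ ℝ. Then λ ≥ 0. -/
/-!
Pair the equation with `u` in the real inner product `⟪z, w⟫ = Re (conj z * w)` and integrate
over a period. Since `⟪u, u'⟫` is periodic, the integral of its derivative `‖u'‖² + ⟪u, u''⟫`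
vanishes, so `∫ ⟪u, u''⟫ = -∫ ‖u'‖² ≤ 0`. On the other hand `⟪u, u''⟫ = -(λ + s) ‖u‖² ≥ -λ ‖u‖²`
because `s ≤ 0`, whence `λ ∫ ‖u‖² ≥ 0`, and `∫ ‖u‖² > 0` because `u` is continuous and nonzero.
-/

open Function Set intervalIntegral
open scoped RealInnerProductSpace

theorem Function.Periodic.deriv {𝕜 F : Type*} [NontriviallyNormedField 𝕜] [NormedAddCommGroup F]
    [NormedSpace 𝕜 F] {f : 𝕜 → F} {c : 𝕜} (hf : Periodic f c) : Periodic (deriv f) c :=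
  fun x => by rw [← deriv_comp_add_const, hf.funext]

theorem Function.Periodic.intervalIntegral_norm_sq_pos {E : Type*} [NormedAddCommGroup E]
    {f : ℝ → E} {c : ℝ} (hf : Periodic f c) (hc : 0 < c) (hcont : Continuous f) (hne : f ≠ 0) :
    0 < ∫ x in 0..c, ‖f x‖ ^ 2 := by
  obtain ⟨x, hx⟩ := Function.ne_iff.mp hne
  obtain ⟨y, hy, hxy⟩ := hf.exists_mem_Ico₀ hc x
  refine integral_pos hc (by fun_prop) (fun _ _ => by positivity) ⟨y, Ico_subset_Icc_self hy, ?_⟩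
  rw [← hxy]
  exact pow_pos (norm_pos_iff.mpr hx) 2

theorem integral_inner_deriv_deriv_of_periodic {E : Type*} [NormedAddCommGroup E]
    [InnerProductSpace ℝ E] {f : ℝ → E} {c : ℝ} (hf : Periodic f c) (hf2 : ContDiff ℝ 2 f) (a : ℝ) :
    ∫ x in a..a + c, ⟪f x, deriv (deriv f) x⟫ = -∫ x in a..a + c, ‖deriv f x‖ ^ 2 := by
  have hf' : ContDiff ℝ 1 (deriv f) := (contDiff_succ_iff_deriv.mp hf2).2.2
  have hd : Differentiable ℝ f := hf2.differentiable two_ne_zero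
  have hd' : Differentiable ℝ (deriv f) := hf'.differentiable one_ne_zero
  have hcont : Continuous (deriv (deriv f)) := hf'.continuous_deriv le_rfl
  have hFTC : ∫ x in a..a + c, (⟪f x, deriv (deriv f) x⟫ + ‖deriv f x‖ ^ 2) = 0 := by
    have hderiv : ∀ x ∈ uIcc a (a + c), HasDerivAt (fun t => ⟪f t, deriv f t⟫)
        (⟪f x, deriv (deriv f) x⟫ + ‖deriv f x‖ ^ 2) x := fun x _ => by
      simpa only [real_inner_self_eq_norm_sq] using
        (hd x).hasDerivAt.inner ℝ (hd' x).hasDerivAt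
    rw [integral_eq_sub_of_hasDerivAt hderiv (Continuous.intervalIntegrable (by fun_prop) _ _),
      hf a, hf.deriv a, sub_self]
  rw [integral_add (Continuous.intervalIntegrable (by fun_prop) _ _)
    (Continuous.intervalIntegrable (by fun_prop) _ _)] at hFTC
  exact eq_neg_of_add_eq_zero_left hFTC

theorem stmt_0_general (L : ℝ) (hL : 0 < L)
    (s : ℝ → ℝ)
    (hs_neg : ∀ x : ℝ, s x ≤ 0)
    (u : ℝ → ℂ) (hu : ContDiff ℝ 2 u) (hu_per : ∀ x : ℝ, u (x + L) = u x)
    (hu_ne : u ≠ 0)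
    (lam : ℝ)
    (heig : ∀ x : ℝ, deriv (deriv u) x + (s x : ℂ) * u x = -(lam : ℂ) * u x) :
    0 ≤ lam := by
  have hcont : Continuous (deriv (deriv u)) :=
    (contDiff_succ_iff_deriv.mp hu).2.2.continuous_deriv le_rfl
  have hucont : Continuous u := hu.continuous
  have hpointwise : ∀ x, -(lam * ‖u x‖ ^ 2) ≤ ⟪u x, deriv (deriv u) x⟫ := fun x => by
    have hu'' : deriv (deriv u) x = -(lam + s x) • u x := by
      rw [Complex.real_smul]
      push_cast
      linear_combination heig x
    rw [hu'', real_inner_smul_right, real_inner_self_eq_norm_sq]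
    nlinarith [hs_neg x, sq_nonneg ‖u x‖]
  have hmass := Periodic.intervalIntegral_norm_sq_pos hu_per hL hucont hu_ne
  have hbound : -(lam * ∫ x in 0..L, ‖u x‖ ^ 2) ≤ 0 := calc
    -(lam * ∫ x in 0..L, ‖u x‖ ^ 2) = ∫ x in 0..L, -(lam * ‖u x‖ ^ 2) := by
      rw [integral_neg, integral_const_mul]
    _ ≤ ∫ x in 0..L, ⟪u x, deriv (deriv u) x⟫ :=
      integral_mono_on hL.le (Continuous.intervalIntegrable (by fun_prop) _ _)
        (Continuous.intervalIntegrable (by fun_prop) _ _) fun x _ => hpointwise x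
    _ = -∫ x in 0..L, ‖deriv u x‖ ^ 2 := by
      simpa only [zero_add] using integral_inner_deriv_deriv_of_periodic hu_per hu 0
    _ ≤ 0 := neg_nonpos.mpr (integral_nonneg hL.le fun _ _ => by positivity)
  exact nonneg_of_mul_nonneg_left (neg_nonpos.mp hbound) hmass

/-- If `s ≤ 0` everywhere, every periodic eigenvalue `λ` of
`u'' + s·u = -λ·u` (with `u` a nonzero `C²` `L`-periodic function) is nonnegative. -/
theorem stmt_0 (L : ℝ) (hL : 0 < L)
    (s : ℝ → ℝ) (hs_cont : Continuous s) (hs_per : ∀ x : ℝ, s (x + L) = s x)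
    (hs_neg : ∀ x : ℝ, s x ≤ 0)
    (u : ℝ → ℂ) (hu : ContDiff ℝ 2 u) (hu_per : ∀ x : ℝ, u (x + L) = u x)
    (hu_ne : u ≠ 0)
    (lam : ℝ)
    (heig : ∀ x : ℝ, deriv (deriv u) x + (s x : ℂ) * u x = -(lam : ℂ) * u x) :
    0 ≤ lam :=
  stmt_0_general L hL s hs_neg u hu hu_per hu_ne lam heig
end

section
/- Let L > 0 and κ = 2π/L. Let s : ℝ → ℝ be continuous and L-periodic with mean ⟨s⟩ = (1/L)∫₀^L s(x) dx ≤ 0, let s₀ = max_{x∈[0,L]} s(x), write δs = s − ⟨s⟩, and assume s₀ ≤ κ² and ∫₀^L δs(x)² dx ≤ (κ² − s₀)·|⟨s⟩|. Then for every continuously differentiable L-periodic v : ℝ → ℂ with ∫₀^L v(x) dx = 0, we have |∫₀^L δs(x)·v(x) dx|² ≤ ( -∫₀^L s(x)·|v(x)|² dx + ∫₀^L |v'(x)|² dx )·|⟨s⟩|. -/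
/-!
Cauchy–Schwarz bounds `‖∫ δs · v‖²` by `‖δs‖₂² ‖v‖₂² ≤ (κ² - s₀) |⟨s⟩| ‖v‖₂²`. Since `v` has mean
zero and is periodic, Parseval together with `ĉₙ(v') = i κ n ĉₙ(v)` and `ĉ₀(v) = 0` gives
Wirtinger's inequality `κ² ‖v‖₂² ≤ ‖v'‖₂²`; with `s ≤ s₀` this yields
`(κ² - s₀) ‖v‖₂² ≤ ‖v'‖₂² - ∫ s |v|²`.
-/

open MeasureTheory Complex Set Real

section CauchySchwarz

variable {α : Type*} [MeasurableSpace α] {μ : Measure α}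

theorem sq_integral_norm_mul_norm_le {E : Type*} [NormedAddCommGroup E] {f g : α → E}
    (hf : MemLp f 2 μ) (hg : MemLp g 2 μ) :
    (∫ a, ‖f a‖ * ‖g a‖ ∂μ) ^ 2 ≤ (∫ a, ‖f a‖ ^ 2 ∂μ) * ∫ a, ‖g a‖ ^ 2 ∂μ := by
  have h := integral_mul_norm_le_Lp_mul_Lq Real.HolderConjugate.two_two
    (by simpa using hf) (by simpa using hg)
  simp only [Real.rpow_two, ← Real.sqrt_eq_rpow] at h
  calc (∫ a, ‖f a‖ * ‖g a‖ ∂μ) ^ 2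
      ≤ (√(∫ a, ‖f a‖ ^ 2 ∂μ) * √(∫ a, ‖g a‖ ^ 2 ∂μ)) ^ 2 :=
        pow_le_pow_left₀ (integral_nonneg fun _ => by positivity) h 2
    _ = (∫ a, ‖f a‖ ^ 2 ∂μ) * ∫ a, ‖g a‖ ^ 2 ∂μ := by
        rw [mul_pow, Real.sq_sqrt (integral_nonneg fun _ => by positivity),
          Real.sq_sqrt (integral_nonneg fun _ => by positivity)]

theorem norm_integral_mul_sq_le {𝕜 : Type*} [RCLike 𝕜] {f g : α → 𝕜}
    (hf : MemLp f 2 μ) (hg : MemLp g 2 μ) :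
    ‖∫ a, f a * g a ∂μ‖ ^ 2 ≤ (∫ a, ‖f a‖ ^ 2 ∂μ) * ∫ a, ‖g a‖ ^ 2 ∂μ := by
  refine le_trans (pow_le_pow_left₀ (norm_nonneg _) (norm_integral_le_integral_norm _) 2) ?_
  simpa only [norm_mul] using sq_integral_norm_mul_norm_le hf hg

end CauchySchwarz

theorem ContinuousOn.memLp_restrict_Ioc {E : Type*} [NormedAddCommGroup E] {f : ℝ → E}
    {a b : ℝ} (hf : ContinuousOn f (Icc a b)) (p : ENNReal) :
    MemLp f p (volume.restrict (Ioc a b)) := by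
  obtain ⟨C, hC⟩ := isCompact_Icc.exists_bound_of_continuousOn hf
  refine (memLp_top_of_bound ((hf.mono Ioc_subset_Icc_self).aestronglyMeasurable
    measurableSet_Ioc) C ?_).mono_exponent le_top
  exact ae_restrict_of_forall_mem measurableSet_Ioc fun x hx => hC x (Ioc_subset_Icc_self hx)

theorem intervalIntegral.norm_integral_mul_sq_le {a b : ℝ} (hab : a ≤ b) {f g : ℝ → ℂ}
    (hf : ContinuousOn f (Icc a b)) (hg : ContinuousOn g (Icc a b)) :
    ‖∫ x in a..b, f x * g x‖ ^ 2 ≤ (∫ x in a..b, ‖f x‖ ^ 2) * ∫ x in a..b, ‖g x‖ ^ 2 := by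
  simp only [intervalIntegral.integral_of_le hab]
  exact _root_.norm_integral_mul_sq_le (hf.memLp_restrict_Ioc 2) (hg.memLp_restrict_Ioc 2)

section Fourier

variable {a b : ℝ} (hab : a < b) {f f' : ℝ → ℂ}
include hab

theorem fourierCoeffOn_zero_of_integral_eq_zero (hmean : ∫ x in a..b, f x = 0) :
    fourierCoeffOn hab f 0 = 0 := by
  simp [fourierCoeffOn_eq_integral, hmean]

theorem fourierCoeffOn_of_hasDerivAt_of_eq {n : ℤ} (hn : n ≠ 0)
    (hf : ∀ x ∈ Icc a b, HasDerivAt f (f' x) x) (hf' : IntervalIntegrable f' volume a b)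
    (hfab : f a = f b) :
    fourierCoeffOn hab f n = (b - a) / (2 * π * I * n) * fourierCoeffOn hab f' n := by
  rw [fourierCoeffOn_of_hasDerivAt hab hn (by rwa [uIcc_of_le hab.le]) hf', hfab, sub_self,
    mul_zero, zero_sub]
  field_simp

theorem two_pi_div_sq_mul_norm_fourierCoeffOn_sq_le (n : ℤ)
    (hf : ∀ x ∈ Icc a b, HasDerivAt f (f' x) x) (hf' : IntervalIntegrable f' volume a b)
    (hfab : f a = f b) (hmean : ∫ x in a..b, f x = 0) :
    (2 * π / (b - a)) ^ 2 * ‖fourierCoeffOn hab f n‖ ^ 2 ≤ ‖fourierCoeffOn hab f' n‖ ^ 2 := by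
  rcases eq_or_ne n 0 with rfl | hn
  · simp [fourierCoeffOn_zero_of_integral_eq_zero hab hmean]
  have hn1 : (1 : ℝ) ≤ |(n : ℝ)| := by exact_mod_cast Int.one_le_abs hn
  have hba : 0 < b - a := sub_pos.2 hab
  have hnorm :
      2 * π / (b - a) * ‖fourierCoeffOn hab f n‖ = ‖fourierCoeffOn hab f' n‖ / |(n : ℝ)| := by
    have hnorm_ba : ‖(b : ℂ) - a‖ = b - a := by
      rw [← ofReal_sub, norm_real, Real.norm_of_nonneg hba.le]
    rw [fourierCoeffOn_of_hasDerivAt_of_eq hab hn hf hf' hfab, norm_mul, norm_div, hnorm_ba]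
    simp only [Complex.norm_mul, Complex.norm_ofNat, norm_real, Real.norm_eq_abs,
      abs_of_pos Real.pi_pos, norm_I, mul_one, norm_intCast]
    field_simp
  rw [← mul_pow, hnorm]
  exact pow_le_pow_left₀ (by positivity) (div_le_self (norm_nonneg _) hn1) 2

theorem wirtinger_inequality (hf : ∀ x ∈ Icc a b, HasDerivAt f (f' x) x)
    (hf' : ContinuousOn f' (Icc a b)) (hfab : f a = f b) (hmean : ∫ x in a..b, f x = 0) :
    (2 * π / (b - a)) ^ 2 * ∫ x in a..b, ‖f x‖ ^ 2 ≤ ∫ x in a..b, ‖f' x‖ ^ 2 := by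
  have hf_cont : ContinuousOn f (Icc a b) := fun x hx =>
    (hf x hx).continuousAt.continuousWithinAt
  have parseval_f := hasSum_sq_fourierCoeffOn hab (hf_cont.memLp_restrict_Ioc 2)
  have parseval_f' := hasSum_sq_fourierCoeffOn hab (hf'.memLp_restrict_Ioc 2)
  have h := hasSum_le (fun n => two_pi_div_sq_mul_norm_fourierCoeffOn_sq_le hab n
    hf (hf'.intervalIntegrable_of_Icc hab.le) hfab hmean)
    (parseval_f.mul_left _) parseval_f'
  rwa [smul_eq_mul, smul_eq_mul, mul_left_comm,
    mul_le_mul_iff_right₀ (inv_pos.2 (sub_pos.2 hab))] at h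

end Fourier

theorem stmt_10_general (L : ℝ) (hL : 0 < L) (κ : ℝ) (hκ : κ = 2 * Real.pi / L)
    (s : ℝ → ℝ) (hs_cont : Continuous s)
    (sbar : ℝ)
    (s₀ : ℝ) (hs₀ : IsGreatest (s '' Set.Icc 0 L) s₀)
    (hfluct : (∫ x in (0:ℝ)..L, (s x - sbar) ^ 2) ≤ (κ ^ 2 - s₀) * |sbar|) :
    ∀ v : ℝ → ℂ, ContDiff ℝ 1 v → (∀ x : ℝ, v (x + L) = v x) →
      (∫ x in (0:ℝ)..L, v x) = 0 →
      ‖∫ x in (0:ℝ)..L, ((s x - sbar : ℝ) : ℂ) * v x‖ ^ 2 ≤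
        (-(∫ x in (0:ℝ)..L, s x * ‖v x‖ ^ 2) + ∫ x in (0:ℝ)..L, ‖deriv v x‖ ^ 2) *
          |sbar| := by
  intro v hv hv_per hv_mean
  have hv_cont : Continuous v := hv.continuous
  have cauchy_schwarz := intervalIntegral.norm_integral_mul_sq_le hL.le
    (f := fun x => ((s x - sbar : ℝ) : ℂ)) (by fun_prop) hv_cont.continuousOn
  simp only [norm_real, Real.norm_eq_abs, sq_abs] at cauchy_schwarz
  have wirtinger := wirtinger_inequality hL
    (fun x _ => (hv.differentiable one_ne_zero x).hasDerivAt)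
    (hv.continuous_deriv le_rfl).continuousOn (by simpa using (hv_per 0).symm) hv_mean
  rw [sub_zero, ← hκ] at wirtinger
  have hs_le_s₀ : ∫ x in (0:ℝ)..L, s x * ‖v x‖ ^ 2 ≤ s₀ * ∫ x in (0:ℝ)..L, ‖v x‖ ^ 2 := by
    rw [← intervalIntegral.integral_const_mul]
    refine intervalIntegral.integral_mono_on hL.le
      ((hs_cont.mul (hv_cont.norm.pow 2)).intervalIntegrable 0 L)
      ((continuous_const.mul (hv_cont.norm.pow 2)).intervalIntegrable 0 L) fun x hx => ?_
    exact mul_le_mul_of_nonneg_right (hs₀.2 ⟨x, hx, rfl⟩) (sq_nonneg _)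
  have hv_sq_nonneg : 0 ≤ ∫ x in (0:ℝ)..L, ‖v x‖ ^ 2 :=
    intervalIntegral.integral_nonneg hL.le fun _ _ => sq_nonneg _
  calc ‖∫ x in (0:ℝ)..L, ((s x - sbar : ℝ) : ℂ) * v x‖ ^ 2
      ≤ ((κ ^ 2 - s₀) * |sbar|) * ∫ x in (0:ℝ)..L, ‖v x‖ ^ 2 :=
        cauchy_schwarz.trans (mul_le_mul_of_nonneg_right hfluct hv_sq_nonneg)
    _ = ((κ ^ 2 - s₀) * ∫ x in (0:ℝ)..L, ‖v x‖ ^ 2) * |sbar| := by ring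
    _ ≤ _ := mul_le_mul_of_nonneg_right (by linarith) (abs_nonneg _)

/-- The condition `b ≤ a·c`: under the hypotheses of Theorem 3.1,
for every mean-zero `C¹` `L`-periodic `v`,
`|∫₀^L δs·v|² ≤ (-∫₀^L s·|v|² + ∫₀^L |v'|²)·|⟨s⟩|`. -/
theorem stmt_10 (L : ℝ) (hL : 0 < L) (κ : ℝ) (hκ : κ = 2 * Real.pi / L)
    (s : ℝ → ℝ) (hs_cont : Continuous s) (hs_per : ∀ x : ℝ, s (x + L) = s x)
    (sbar : ℝ) (hsbar : sbar = (1 / L) * ∫ x in (0:ℝ)..L, s x)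
    (hsbar_neg : sbar ≤ 0)
    (s₀ : ℝ) (hs₀ : IsGreatest (s '' Set.Icc 0 L) s₀)
    (hs₀κ : s₀ ≤ κ ^ 2)
    (hfluct : (∫ x in (0:ℝ)..L, (s x - sbar) ^ 2) ≤ (κ ^ 2 - s₀) * |sbar|) :
    ∀ v : ℝ → ℂ, ContDiff ℝ 1 v → (∀ x : ℝ, v (x + L) = v x) →
      (∫ x in (0:ℝ)..L, v x) = 0 →
      ‖∫ x in (0:ℝ)..L, ((s x - sbar : ℝ) : ℂ) * v x‖ ^ 2 ≤
        (-(∫ x in (0:ℝ)..L, s x * ‖v x‖ ^ 2) + ∫ x in (0:ℝ)..L, ‖deriv v x‖ ^ 2) *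
          |sbar| :=
  stmt_10_general L hL κ hκ s hs_cont sbar s₀ hs₀ hfluct
end

section
/- Let α, β, κ ∈ ℝ with α > 0, β > 0, κ > 0, and suppose β ≤ -α + √(3α² + 2κ²·α). Then (i) β − α ≤ κ², and (ii) β²/2 ≤ (κ² − (β − α))·α. -/
/-- The algebraic derivation of the paper's stability bound (eq:bound3):
if `0 < β ≤ -α + √(3α² + 2κ²α)` with `α, κ > 0`, then `β - α ≤ κ²` and
`β²/2 ≤ (κ² - (β - α))·α`. -/
theorem stmt_11 (α β κ : ℝ) (hα : 0 < α) (hβ : 0 < β) (hκ : 0 < κ)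
    (hbound : β ≤ -α + Real.sqrt (3 * α ^ 2 + 2 * κ ^ 2 * α)) :
    β - α ≤ κ ^ 2 ∧ β ^ 2 / 2 ≤ (κ ^ 2 - (β - α)) * α := by
  have hnn : (0:ℝ) ≤ 3 * α ^ 2 + 2 * κ ^ 2 * α := by positivity
  have h1 : β + α ≤ Real.sqrt (3 * α ^ 2 + 2 * κ ^ 2 * α) := by linarith
  have h2 : (β + α) ^ 2 ≤ 3 * α ^ 2 + 2 * κ ^ 2 * α := by
    have := Real.sq_sqrt hnn
    nlinarith [Real.sqrt_nonneg (3 * α ^ 2 + 2 * κ ^ 2 * α)]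
  constructor
  · nlinarith
  · nlinarith
end
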